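/- arXiv:1512.07846 — 2 statements merged into one kernel-verified Lean document; each statement's English description precedes it below -/
import Mathlib

section
/- For any subspaces H₁, H₂, H₃ of E, the identity Π(H₁)·Π(H₃)·Π(H₂) − Π(H₁⊓H₂⊓H₃) = Π(H₁)·𝔇(H₁,H₂,H₃)·Π(H₂) holds, where the products are compositions of operators. -/
variable {E : Type*} [NormedAddCommGroup E] [InnerProductSpace ℂ E] [FiniteDimensional ℂ E]

/-- The orthogonal projection onto a subspace `K`, regarded as an operator on `E`. -/
noncomputable def proj (K : Submodule ℂ E) : E →L[ℂ] E :=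
  K.subtypeL.comp (K.orthogonalProjectionOnto)

/-- The Möbius (non-additivity) operator `𝔇(H₁,H₂)`. -/
noncomputable def MobD (H₁ H₂ : Submodule ℂ E) : E →L[ℂ] E :=
  proj (H₁ ⊔ H₂) + proj (H₁ ⊓ H₂) - proj H₁ - proj H₂

/-- The three-subspace Möbius operator `𝔇(H₁,H₂,H₃)`. -/
noncomputable def MobD₃ (H₁ H₂ H₃ : Submodule ℂ E) : E →L[ℂ] E :=
  proj (H₁ ⊔ H₂ ⊔ H₃) - proj (H₁ ⊔ H₂) - proj (H₁ ⊔ H₃) - proj (H₂ ⊔ H₃)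
    + proj H₁ + proj H₂ + proj H₃ - proj (H₁ ⊓ H₂ ⊓ H₃)

/-- The dual three-subspace Möbius operator `𝔇̃(H₁,H₂,H₃)`. -/
noncomputable def MobDt₃ (H₁ H₂ H₃ : Submodule ℂ E) : E →L[ℂ] E :=
  proj (H₁ ⊓ H₂ ⊓ H₃) - proj (H₁ ⊓ H₂) - proj (H₁ ⊓ H₃) - proj (H₂ ⊓ H₃)
    + proj H₁ + proj H₂ + proj H₃ - proj (H₁ ⊔ H₂ ⊔ H₃)

/- In `proj H₁ * MobD₃ H₁ H₂ H₃ * proj H₂`, a middle projection onto a space containing `H₁` or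
`H₂` is absorbed by the outer ones, and `proj (H₁ ⊓ H₂ ⊓ H₃)` absorbs them. So every term except
the one with `proj H₃` becomes `proj H₁ * proj H₂` or `proj (H₁ ⊓ H₂ ⊓ H₃)`, and the six copies
of `proj H₁ * proj H₂` cancel. -/

lemma proj_mul_proj_of_le {H K : Submodule ℂ E} (h : H ≤ K) : proj H * proj K = proj H :=
  Submodule.starProjection_comp_starProjection_of_le h

lemma proj_mul_proj_of_ge {H K : Submodule ℂ E} (h : H ≤ K) : proj K * proj H = proj H :=
  ContinuousLinearMap.ext fun x ↦
    Submodule.starProjection_eq_self_iff.mpr (h (H.starProjection_apply_mem x))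

lemma proj_mul_proj_mul_proj_of_left_le {H₁ H₂ K : Submodule ℂ E} (h : H₁ ≤ K) :
    proj H₁ * proj K * proj H₂ = proj H₁ * proj H₂ := by
  rw [proj_mul_proj_of_le h]

lemma proj_mul_proj_mul_proj_of_right_le {H₁ H₂ K : Submodule ℂ E} (h : H₂ ≤ K) :
    proj H₁ * proj K * proj H₂ = proj H₁ * proj H₂ := by
  rw [mul_assoc, proj_mul_proj_of_ge h]

lemma proj_mul_proj_mul_proj_of_le_inf {H₁ H₂ K : Submodule ℂ E} (h : K ≤ H₁ ⊓ H₂) :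
    proj H₁ * proj K * proj H₂ = proj K := by
  rw [proj_mul_proj_of_ge (h.trans inf_le_left), proj_mul_proj_of_le (h.trans inf_le_right)]

theorem proj_mul_proj_mul_proj (H₁ H₂ H₃ : Submodule ℂ E) :
    proj H₁ * proj H₃ * proj H₂ - proj (H₁ ⊓ H₂ ⊓ H₃) =
      proj H₁ * MobD₃ H₁ H₂ H₃ * proj H₂ := by
  simp only [MobD₃, mul_sub, mul_add, sub_mul, add_mul]
  rw [proj_mul_proj_mul_proj_of_left_le (K := H₁ ⊔ H₂ ⊔ H₃) (le_sup_left.trans le_sup_left),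
    proj_mul_proj_mul_proj_of_left_le (K := H₁ ⊔ H₂) le_sup_left,
    proj_mul_proj_mul_proj_of_left_le (K := H₁ ⊔ H₃) le_sup_left,
    proj_mul_proj_mul_proj_of_right_le (K := H₂ ⊔ H₃) le_sup_left,
    proj_mul_proj_mul_proj_of_left_le (K := H₁) le_rfl,
    proj_mul_proj_mul_proj_of_right_le (K := H₂) le_rfl,
    proj_mul_proj_mul_proj_of_le_inf inf_le_left]
  abel
end

section
/- Let H₁, H₂, h be subspaces of E with H₁⊓H₂ ⊆ h ⊆ H₁. Then 𝔇(H₂,h) + 𝔇(h⊔H₂, H₁) = 𝔇(H₂,H₁). -/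
variable {E : Type*} [NormedAddCommGroup E] [InnerProductSpace ℂ E] [FiniteDimensional ℂ E]

/-!
`𝔇` is the defect `f (a ⊔ b) + f (a ⊓ b) - f a - f b` of the map `f = Π` on the modular lattice
of subspaces, and the identity holds for the defect of any map from a modular lattice to an
abelian group. For `a ⊓ b ≤ c ≤ a` the modular law gives `(c ⊔ b) ⊓ a = c`, while
`b ⊓ c = b ⊓ a` and `c ⊔ b ⊔ a = b ⊔ a`; after these substitutions the terms `f c` and
`f (c ⊔ b)` cancel between the two defects on the left.
-/

section ValuationDefect

variable {α G : Type*} [Lattice α] [AddCommGroup G]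

def valuationDefect (f : α → G) (a b : α) : G :=
  f (a ⊔ b) + f (a ⊓ b) - f a - f b

theorem inf_eq_inf_of_inf_le_of_le {a b c : α} (hab : a ⊓ b ≤ c) (hca : c ≤ a) :
    b ⊓ c = b ⊓ a :=
  le_antisymm (inf_le_inf_left b hca) (le_inf inf_le_left (inf_comm b a ▸ hab))

theorem sup_inf_eq_of_inf_le_of_le [IsModularLattice α] {a b c : α} (hab : a ⊓ b ≤ c)
    (hca : c ≤ a) : (c ⊔ b) ⊓ a = c := by
  rw [sup_inf_assoc_of_le b hca, inf_comm b a, sup_eq_left.2 hab]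

theorem valuationDefect_add_valuationDefect_of_inf_le_of_le [IsModularLattice α] (f : α → G)
    {a b c : α} (hab : a ⊓ b ≤ c) (hca : c ≤ a) :
    valuationDefect f b c + valuationDefect f (c ⊔ b) a = valuationDefect f b a := by
  have hsup : c ⊔ b ⊔ a = b ⊔ a := by rw [sup_comm c b, sup_assoc, sup_eq_right.2 hca]
  simp only [valuationDefect, hsup, sup_inf_eq_of_inf_le_of_le hab hca,
    inf_eq_inf_of_inf_le_of_le hab hca, sup_comm b c]
  abel

end ValuationDefect

theorem mobD_eq_valuationDefect (H₁ H₂ : Submodule ℂ E) :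
    MobD H₁ H₂ = valuationDefect proj H₁ H₂ :=
  rfl

theorem mobD_add_mobD_of_mem_interval (H₁ H₂ h : Submodule ℂ E)
    (h₁ : H₁ ⊓ H₂ ≤ h) (h₂ : h ≤ H₁) :
    MobD H₂ h + MobD (h ⊔ H₂) H₁ = MobD H₂ H₁ := by
  simp only [mobD_eq_valuationDefect]
  exact valuationDefect_add_valuationDefect_of_inf_le_of_le proj h₁ h₂
end
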